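/- arXiv:1612.03408 — 2 statements merged into one kernel-verified Lean document; each statement's English description precedes it below -/
import Mathlib

section
/- Let A and B be commutative rings with unity, f : A → B a ring homomorphism, and J an ideal of B. For every finitely generated ideal 𝔟 of A, one has the equality kgr_{A⋈^f J}(𝔟^e, A⋈^f J) = min{ kgr_A(𝔟, A), kgr_A(𝔟, J) }, where 𝔟^e = 𝔟(A⋈^f J). -/
/-- The Koszul cochain differential of the complex `Hom(K_•(x), M)`, described explicitly:
the degree-`i` term is the module of `M`-valued functions on the `i`-element subsets of
`Fin n`, and the differential is the usual alternating-sum formula. -/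
noncomputable def koszulMap (A : Type*) [CommRing A] (M : Type*) [AddCommGroup M]
    [Module A M] {n : ℕ} (x : Fin n → A) (i : ℕ) :
    ({s : Finset (Fin n) // s.card = i} → M) →ₗ[A]
      ({s : Finset (Fin n) // s.card = i + 1} → M) where
  toFun g t := ∑ j ∈ t.1.attach,
    (((-1 : A) ^ ((t.1.filter (fun k => k < j.1)).card)) * x j.1) •
      g ⟨t.1.erase j.1, by
        rw [Finset.card_erase_of_mem j.2, t.2]; omega⟩

  map_add' g h := funext fun t => by
    simp [smul_add, Finset.sum_add_distrib]
  map_smul' a g := funext fun t => by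
    simp only [Pi.smul_apply, RingHom.id_apply, Finset.smul_sum]
    exact Finset.sum_congr rfl fun j _ => by
      rw [smul_smul, smul_smul, mul_comm]

/-- Nonvanishing of the `i`-th cohomology `H^i(Hom(K_•(x), M))` of the Koszul
cochain complex. -/
def koszulCohomologyNeZero (A : Type*) [CommRing A] (M : Type*) [AddCommGroup M]
    [Module A M] {n : ℕ} (x : Fin n → A) : ℕ → Prop
  | 0 => LinearMap.ker (koszulMap A M x 0) ≠ ⊥
  | (i + 1) => ¬ (LinearMap.ker (koszulMap A M x (i + 1)) ≤
      LinearMap.range (koszulMap A M x i))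

/-- The Koszul grade of a finite sequence `x` on `M`:
`inf { i : H^i(Hom(K_•(x), M)) ≠ 0 }` (an element of `ℕ∞`, equal to `⊤` if all
cohomology vanishes). -/
noncomputable def kgrSeq (A : Type*) [CommRing A] (M : Type*) [AddCommGroup M]
    [Module A M] {n : ℕ} (x : Fin n → A) : ℕ∞ :=
  sInf {i : ℕ∞ | ∃ k : ℕ, i = k ∧ koszulCohomologyNeZero A M x k}

/-- The Koszul grade `kgr_A(𝔞, M)` of an arbitrary ideal `𝔞` on `M`: the supremum of the
Koszul grades of finite sequences contained in `𝔞` (equivalently, of the finitely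
generated subideals of `𝔞`). -/
noncomputable def kgr (A : Type*) [CommRing A] (𝔞 : Ideal A) (M : Type*)
    [AddCommGroup M] [Module A M] : ℕ∞ :=
  ⨆ (n : ℕ) (x : Fin n → A) (_ : ∀ j, x j ∈ 𝔞), kgrSeq A M x

/-- The height of an ideal: the infimum of the heights of the primes containing it. -/
noncomputable def idealHeight (A : Type*) [CommRing A] (𝔞 : Ideal A) : ℕ∞ :=
  ⨅ (p : PrimeSpectrum A) (_ : 𝔞 ≤ p.asIdeal), Order.height p

/-- A commutative ring `R` is Cohen-Macaulay in the sense of a class `𝒜` of ideals if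
`height 𝔞 = kgr_R(𝔞, R)` for every `𝔞 ∈ 𝒜`. -/
def IsCMSense (R : Type*) [CommRing R] (𝒜 : Set (Ideal R)) : Prop :=
  ∀ 𝔞 ∈ 𝒜, idealHeight R 𝔞 = kgr R 𝔞 R

/-- Cohen-Macaulay in the sense of ideals. -/
def IsCMIdeals (R : Type*) [CommRing R] : Prop :=
  ∀ 𝔞 : Ideal R, idealHeight R 𝔞 = kgr R 𝔞 R

/-- Cohen-Macaulay in the sense of maximal ideals. -/
def IsCMMaximal (R : Type*) [CommRing R] : Prop :=
  ∀ 𝔪 : Ideal R, 𝔪.IsMaximal → idealHeight R 𝔪 = kgr R 𝔪 R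

/-- The amalgamation `A ⋈^f J = {(a, f a + j) : a ∈ A, j ∈ J}` of `A` with `B` along the
ideal `J` of `B` with respect to `f : A →+* B`, as a subring of `A × B`. -/
def amalgamation {A B : Type*} [CommRing A] [CommRing B] (f : A →+* B) (J : Ideal B) :
    Subring (A × B) where
  carrier := {p | p.2 - f p.1 ∈ J}
  zero_mem' := by simp
  one_mem' := by simp
  add_mem' := fun {p q} hp hq => by
    have := J.add_mem hp hq
    simpa [add_sub_add_comm] using this
  neg_mem' := fun {p} hp => by
    show (-p).2 - f ((-p).1) ∈ J
    have key : (-p).2 - f ((-p).1) = -(p.2 - f p.1) := by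
      simp only [Prod.fst_neg, Prod.snd_neg, map_neg]; ring
    rw [key]
    exact J.neg_mem hp
  mul_mem' := fun {p q} hp hq => by
    show (p * q).2 - f ((p * q).1) ∈ J
    have key : (p * q).2 - f ((p * q).1)
        = p.2 * (q.2 - f q.1) + (p.2 - f p.1) * f q.1 := by
      simp only [Prod.fst_mul, Prod.snd_mul, map_mul]; ring
    rw [key]
    exact J.add_mem (J.mul_mem_left _ hq) (J.mul_mem_right _ hp)

/-- The natural embedding `ι_A : A → A ⋈^f J`, `a ↦ (a, f a)`. -/
def amalgIota {A B : Type*} [CommRing A] [CommRing B] (f : A →+* B) (J : Ideal B) :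
    A →+* amalgamation f J where
  toFun a := ⟨(a, f a), show (a, f a).2 - f (a, f a).1 ∈ J by simp⟩
  map_one' := Subtype.ext (by simp)
  map_mul' a b := Subtype.ext (by simp)
  map_zero' := Subtype.ext (by simp)
  map_add' a b := Subtype.ext (by simp)

/-- The extension `𝔞^e = 𝔞(A ⋈^f J)` of an ideal `𝔞` of `A` along `ι_A`. -/
noncomputable def idealExt {A B : Type*} [CommRing A] [CommRing B] (f : A →+* B)
    (J : Ideal B) (𝔞 : Ideal A) : Ideal ↥(amalgamation f J) :=
  Ideal.map (amalgIota f J) 𝔞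

/-- `kgr_A(𝔞, J)` where the ideal `J` of `B` is viewed as an `A`-module via `f`. -/
noncomputable def kgrIdeal {A B : Type*} [CommRing A] [CommRing B] (f : A →+* B)
    (J : Ideal B) (𝔞 : Ideal A) : ℕ∞ :=
  letI : Module A J := Module.compHom J f
  kgr A 𝔞 J

/-- The ideal `𝔭'^f = 𝔭 ⋈^f J = {(p, f p + j) : p ∈ 𝔭, j ∈ J}` of `A ⋈^f J`. -/
def primeAmalg {A B : Type*} [CommRing A] [CommRing B] (f : A →+* B) (J : Ideal B)
    (𝔭 : Ideal A) : Ideal ↥(amalgamation f J) where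
  carrier := {z | (z : A × B).1 ∈ 𝔭}
  zero_mem' := by simp
  add_mem' := fun {a b} ha hb => 𝔭.add_mem ha hb
  smul_mem' := fun c {z} hz => 𝔭.mul_mem_left (c : A × B).1 hz

/-- The ideal `𝔮̄^f = {(a, f a + j) : a ∈ A, j ∈ J, f a + j ∈ 𝔮}` of `A ⋈^f J`. -/
def qbarAmalg {A B : Type*} [CommRing A] [CommRing B] (f : A →+* B) (J : Ideal B)
    (𝔮 : Ideal B) : Ideal ↥(amalgamation f J) where
  carrier := {z | (z : A × B).2 ∈ 𝔮}
  zero_mem' := by simp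
  add_mem' := fun {a b} ha hb => 𝔮.add_mem ha hb
  smul_mem' := fun c {z} hz => 𝔮.mul_mem_left (c : A × B).2 hz

/-- A ring homomorphism `f : A →+* B` satisfies the going-down property. -/
def RingHom.GoesDown {A B : Type*} [CommRing A] [CommRing B] (f : A →+* B) : Prop :=
  ∀ (𝔭' 𝔭 : Ideal A), 𝔭'.IsPrime → 𝔭.IsPrime → 𝔭' ≤ 𝔭 →
    ∀ 𝔮 : Ideal B, 𝔮.IsPrime → 𝔮.comap f = 𝔭 →
      ∃ 𝔮' : Ideal B, 𝔮'.IsPrime ∧ 𝔮' ≤ 𝔮 ∧ 𝔮'.comap f = 𝔭'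

/-!
As an `A`-module via `ι_A`, the amalgamation `A ⋈^f J` is isomorphic to `A × J` through
`(a, f a + j) ↦ (a, j)`, and Koszul cohomology commutes with finite products; hence the Koszul
grade of `ι_A ∘ x` on `A ⋈^f J` is the minimum of the grades of `x` on `A` and on `J`.

It remains to see that the Koszul grade of a finitely generated ideal is that of any finite
generating sequence `x`. Removing one entry `y p` from a sequence `y` exhibits the Koszul cochain
complex of `y` as the mapping cone of multiplication by `y p` on the complex of the shorter
sequence `y'`. The long exact sequence of the cone gives `kgr y' ≤ kgr y`, with equality when
`y p ∈ (y')`, because the ideal `(y')` annihilates the Koszul cohomology of `y'` (contraction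
homotopy). For any sequence `z` in `(x)` this yields `kgr z ≤ kgr (x ++ z) = kgr x`.
-/

open Finset

abbrev KoszulCochain (M : Type*) (n i : ℕ) := {s : Finset (Fin n) // s.card = i} → M

section Basic

variable {A : Type*} [CommRing A] {M : Type*} [AddCommGroup M] [Module A M] {n : ℕ}

lemma neg_one_pow_mul_self (c : ℕ) : (-1 : A) ^ c * (-1 : A) ^ c = 1 := by
  rw [← mul_pow]; simp

lemma neg_one_pow_smul_neg_one_pow_smul (c : ℕ) (m : M) :
    (-1 : A) ^ c • (-1 : A) ^ c • m = m := by
  rw [smul_smul, neg_one_pow_mul_self, one_smul]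

def countBelow (s : Finset (Fin n)) (j : Fin n) : ℕ := #(s.filter (· < j))

lemma countBelow_erase_of_not_lt {s : Finset (Fin n)} {j q : Fin n} (h : ¬ j < q) :
    countBelow (s.erase j) q = countBelow s q := by
  rw [countBelow, filter_erase, erase_eq_of_notMem (by simp [h]), countBelow]

lemma countBelow_erase_of_lt {s : Finset (Fin n)} {j q : Fin n} (hj : j ∈ s) (h : j < q) :
    countBelow (s.erase j) q + 1 = countBelow s q := by
  rw [countBelow, filter_erase, card_erase_add_one (by simp [hj, h]), countBelow]

lemma countBelow_insert_of_not_lt {s : Finset (Fin n)} {j q : Fin n} (h : ¬ q < j) :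
    countBelow (insert q s) j = countBelow s j := by
  rw [countBelow, filter_insert, if_neg h, countBelow]

lemma countBelow_insert_of_lt {s : Finset (Fin n)} {j q : Fin n} (hq : q ∉ s) (h : q < j) :
    countBelow (insert q s) j = countBelow s j + 1 := by
  rw [countBelow, filter_insert, if_pos h, card_insert_of_notMem (by simp [hq]), countBelow]

def koszulTerm (x : Fin n → A) {i : ℕ} (g : KoszulCochain M n i)
    (t : {s : Finset (Fin n) // s.card = i + 1}) (j : Fin n) : M :=
  if h : j ∈ t.1 then
    ((-1 : A) ^ countBelow t.1 j * x j) • g ⟨t.1.erase j, by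
      rw [card_erase_of_mem h, t.2]; omega⟩
  else 0

lemma koszulMap_apply (x : Fin n → A) {i : ℕ} (g : KoszulCochain M n i) (t) :
    koszulMap A M x i g t = ∑ j ∈ t.1, koszulTerm x g t j := by
  rw [← sum_attach t.1]
  exact sum_congr rfl fun j _ => by rw [koszulTerm, dif_pos j.2]; rfl

end Basic

section Functoriality

variable {A : Type*} [CommRing A] {M N : Type*} [AddCommGroup M] [Module A M]
  [AddCommGroup N] [Module A N] {n : ℕ}

lemma koszulMap_comp_linearMap (φ : M →ₗ[A] N) (x : Fin n → A) {i : ℕ}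
    (g : KoszulCochain M n i) :
    koszulMap A N x i (φ ∘ g) = φ ∘ koszulMap A M x i g := by
  ext t
  simp [koszulMap_apply, koszulTerm, apply_dite φ]

lemma comp_mem_ker_koszulMap (φ : M →ₗ[A] N) {x : Fin n → A} {i : ℕ}
    {g : KoszulCochain M n i} (hg : g ∈ LinearMap.ker (koszulMap A M x i)) :
    φ ∘ g ∈ LinearMap.ker (koszulMap A N x i) := by
  rw [LinearMap.mem_ker, koszulMap_comp_linearMap, LinearMap.mem_ker.1 hg]
  ext; simp

variable (A M) in
noncomputable def koszulCoboundaries (x : Fin n → A) :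
    (i : ℕ) → Submodule A (KoszulCochain M n i)
  | 0 => ⊥
  | i + 1 => LinearMap.range (koszulMap A M x i)

lemma koszulCohomologyNeZero_iff (x : Fin n → A) (i : ℕ) :
    koszulCohomologyNeZero A M x i ↔
      ¬ LinearMap.ker (koszulMap A M x i) ≤ koszulCoboundaries A M x i := by
  cases i
  · exact (not_congr le_bot_iff).symm
  · rfl

lemma comp_mem_koszulCoboundaries (φ : M →ₗ[A] N) {x : Fin n → A} {i : ℕ}
    {g : KoszulCochain M n i} (hg : g ∈ koszulCoboundaries A M x i) :
    φ ∘ g ∈ koszulCoboundaries A N x i := by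
  cases i with
  | zero =>
    rw [koszulCoboundaries, Submodule.mem_bot] at hg ⊢
    simp [hg]
  | succ i =>
    obtain ⟨w, rfl⟩ := hg
    exact ⟨φ ∘ w, koszulMap_comp_linearMap φ x w⟩

lemma koszulCohomologyNeZero_of_retract (φ : M →ₗ[A] N) (ψ : N →ₗ[A] M)
    (hψφ : ∀ m, ψ (φ m) = m) {x : Fin n → A} {i : ℕ}
    (h : koszulCohomologyNeZero A M x i) : koszulCohomologyNeZero A N x i := by
  rw [koszulCohomologyNeZero_iff] at h ⊢
  refine fun hN => h fun g hg => ?_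
  simpa [Function.comp_def, hψφ] using
    comp_mem_koszulCoboundaries ψ (hN (comp_mem_ker_koszulMap φ hg))

lemma koszulCohomologyNeZero_congr (e : M ≃ₗ[A] N) (x : Fin n → A) (i : ℕ) :
    koszulCohomologyNeZero A M x i ↔ koszulCohomologyNeZero A N x i :=
  ⟨koszulCohomologyNeZero_of_retract e.toLinearMap e.symm.toLinearMap e.symm_apply_apply,
    koszulCohomologyNeZero_of_retract e.symm.toLinearMap e.toLinearMap e.apply_symm_apply⟩

lemma koszulCohomologyNeZero_prod_iff (x : Fin n → A) (i : ℕ) :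
    koszulCohomologyNeZero A (M × N) x i ↔
      koszulCohomologyNeZero A M x i ∨ koszulCohomologyNeZero A N x i := by
  refine ⟨fun h => ?_, fun h => h.elim
    (koszulCohomologyNeZero_of_retract (LinearMap.inl A M N) (LinearMap.fst A M N) fun _ => rfl)
    (koszulCohomologyNeZero_of_retract (LinearMap.inr A M N) (LinearMap.snd A M N) fun _ => rfl)⟩
  simp only [koszulCohomologyNeZero_iff] at h ⊢
  by_contra! hMN
  refine h fun g hg => ?_
  have hsplit : g = LinearMap.inl A M N ∘ (LinearMap.fst A M N ∘ g) +
      LinearMap.inr A M N ∘ (LinearMap.snd A M N ∘ g) := by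
    ext s <;> simp
  rw [hsplit]
  exact add_mem (comp_mem_koszulCoboundaries _ (hMN.1 (comp_mem_ker_koszulMap _ hg)))
    (comp_mem_koszulCoboundaries _ (hMN.2 (comp_mem_ker_koszulMap _ hg)))

end Functoriality

section Grade

lemma kgrSeq_congr {A A' : Type*} [CommRing A] [CommRing A'] {M M' : Type*}
    [AddCommGroup M] [Module A M] [AddCommGroup M'] [Module A' M'] {n n' : ℕ}
    {x : Fin n → A} {x' : Fin n' → A'}
    (h : ∀ k, koszulCohomologyNeZero A M x k ↔ koszulCohomologyNeZero A' M' x' k) :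
    kgrSeq A M x = kgrSeq A' M' x' := by
  simp only [kgrSeq, h]

variable {A : Type*} [CommRing A] {M N : Type*} [AddCommGroup M] [Module A M]
  [AddCommGroup N] [Module A N] {n : ℕ}

lemma kgrSeq_prod (x : Fin n → A) :
    kgrSeq A (M × N) x = min (kgrSeq A M x) (kgrSeq A N x) := by
  simp only [kgrSeq, koszulCohomologyNeZero_prod_iff, ← sInf_union]
  congr 1
  ext
  simp only [Set.mem_ofPred_eq, Set.mem_union, ← exists_or, and_or_left]

lemma kgrSeq_le_of_forall_exists_le {x : Fin n → A} {n' : ℕ} {y : Fin n' → A}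
    (h : ∀ k, koszulCohomologyNeZero A M y k → ∃ j ≤ k, koszulCohomologyNeZero A M x j) :
    kgrSeq A M x ≤ kgrSeq A M y := by
  refine le_sInf ?_
  rintro _ ⟨k, rfl, hk⟩
  obtain ⟨j, hjk, hj⟩ := h k hk
  exact (sInf_le ⟨j, rfl, hj⟩ : kgrSeq A M x ≤ j).trans (by exact_mod_cast hjk)

end Grade

section RestrictScalars

variable {A B : Type*} [CommRing A] [CommRing B] (φ : A →+* B) {N : Type*} [AddCommGroup N]
  [Module B N] {n : ℕ}

lemma koszulMap_compHom (x : Fin n → A) {i : ℕ} (g : KoszulCochain N n i) :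
    @koszulMap A _ N _ (Module.compHom N φ) n x i g = koszulMap B N (φ ∘ x) i g := by
  let _ : Module A N := Module.compHom N φ
  ext t
  refine sum_congr rfl fun j _ => ?_
  change φ _ • (_ : N) = _
  simp

lemma kgrSeq_compHom (x : Fin n → A) :
    @kgrSeq A _ N _ (Module.compHom N φ) n x = kgrSeq B N (φ ∘ x) := by
  let _ : Module A N := Module.compHom N φ
  refine kgrSeq_congr fun k => ?_
  cases k <;> simp only [koszulCohomologyNeZero, Submodule.ne_bot_iff, SetLike.le_def,
    LinearMap.mem_ker, LinearMap.mem_range, koszulMap_compHom]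

end RestrictScalars

section Contraction

variable (A : Type*) [CommRing A] {M : Type*} [AddCommGroup M] [Module A M] {n : ℕ}

/-- Interior multiplication by the `q`-th basis vector: a homotopy between multiplication by
`x q` and zero on the Koszul cochain complex of `x`. -/
def koszulContraction (q : Fin n) (i : ℕ) :
    KoszulCochain M n (i + 1) →ₗ[A] KoszulCochain M n i where
  toFun g s := if h : q ∈ s.1 then 0 else
    (-1 : A) ^ countBelow s.1 q • g ⟨insert q s.1, by rw [card_insert_of_notMem h, s.2]⟩
  map_add' g g' := by ext s; by_cases h : q ∈ s.1 <;> simp [h]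
  map_smul' a g := by ext s; by_cases h : q ∈ s.1 <;> simp [h, smul_comm _ a]

variable {A}

lemma neg_one_pow_countBelow_add_neg_one_pow_countBelow {s : Finset (Fin n)} {j q : Fin n}
    (hj : j ∈ s) (hq : q ∉ s) :
    (-1 : A) ^ (countBelow s j + countBelow (s.erase j) q) +
      (-1 : A) ^ (countBelow s q + countBelow (insert q s) j) = 0 := by
  rcases (ne_of_mem_of_not_mem hj hq).lt_or_gt with hlt | hgt
  · rw [← countBelow_erase_of_lt hj hlt, countBelow_insert_of_not_lt (asymm hlt)]
    ring
  · rw [countBelow_erase_of_not_lt (asymm hgt), countBelow_insert_of_lt hq hgt]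
    ring

lemma koszulContraction_koszulMap_zero (x : Fin n → A) (q : Fin n) (g : KoszulCochain M n 0) :
    koszulContraction A q 0 (koszulMap A M x 0 g) = x q • g := by
  ext s
  have hs : s.1 = ∅ := card_eq_zero.1 s.2
  have hq : q ∉ s.1 := by simp [hs]
  simp only [koszulContraction, LinearMap.coe_mk, AddHom.coe_mk, dif_neg hq, Pi.smul_apply,
    koszulMap_apply, sum_insert hq]
  rw [sum_eq_zero fun j hj => absurd (hs ▸ hj) (notMem_empty j), add_zero, koszulTerm,
    dif_pos (mem_insert_self q s.1), countBelow_insert_of_not_lt (lt_irrefl q),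
    smul_smul, ← mul_assoc, neg_one_pow_mul_self, one_mul]
  exact congrArg _ (congrArg g (Subtype.ext (erase_insert hq)))

lemma koszulMap_koszulContraction_add (x : Fin n → A) (q : Fin n) {i : ℕ}
    (g : KoszulCochain M n (i + 1)) :
    koszulMap A M x i (koszulContraction A q i g) +
      koszulContraction A q (i + 1) (koszulMap A M x (i + 1) g) = x q • g := by
  ext s
  simp only [koszulContraction, LinearMap.coe_mk, AddHom.coe_mk, Pi.add_apply, Pi.smul_apply,
    koszulMap_apply]
  by_cases hq : q ∈ s.1
  · -- only the term `j = q` survives, since the contraction vanishes on sets containing `q`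
    rw [dif_pos hq, add_zero, sum_eq_single_of_mem q hq]
    · rw [koszulTerm, dif_pos hq, dif_neg (notMem_erase q s.1),
        countBelow_erase_of_not_lt (lt_irrefl q), smul_smul, mul_comm, ← mul_assoc,
        neg_one_pow_mul_self, one_mul]
      exact congrArg _ (congrArg g (Subtype.ext (insert_erase hq)))
    · intro j hj hjq
      rw [koszulTerm, dif_pos hj, dif_pos (mem_erase.2 ⟨Ne.symm hjq, hq⟩), smul_zero]
  · rw [dif_neg hq, sum_insert hq, smul_add, smul_sum, add_left_comm, ← sum_add_distrib,
      sum_eq_zero, add_zero]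
    · rw [koszulTerm, dif_pos (mem_insert_self q s.1), countBelow_insert_of_not_lt (lt_irrefl q),
        smul_smul, ← mul_assoc, neg_one_pow_mul_self, one_mul]
      exact congrArg _ (congrArg g (Subtype.ext (erase_insert hq)))
    · intro j hj
      have hqj : q ∉ s.1.erase j := fun h => hq (mem_of_mem_erase h)
      have hset : insert q (s.1.erase j) = (insert q s.1).erase j :=
        (erase_insert_of_ne (ne_of_mem_of_not_mem hj hq).symm).symm
      rw [koszulTerm, koszulTerm, dif_pos hj, dif_pos (mem_insert_of_mem hj), dif_neg hqj,
        smul_smul, smul_smul]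
      simp only [hset]
      rw [← add_smul]
      convert zero_smul A _
      linear_combination x j * neg_one_pow_countBelow_add_neg_one_pow_countBelow (A := A) hj hq

lemma smul_mem_koszulCoboundaries {x : Fin n → A} {z : A} (hz : z ∈ Ideal.span (Set.range x))
    {i : ℕ} {g : KoszulCochain M n i} (hg : g ∈ LinearMap.ker (koszulMap A M x i)) :
    z • g ∈ koszulCoboundaries A M x i := by
  obtain ⟨c, rfl⟩ := Ideal.mem_span_range_iff_exists_fun.1 hz
  rw [LinearMap.mem_ker] at hg
  cases i with
  | zero =>
    have hxg (q : Fin n) : x q • g = 0 := by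
      rw [← koszulContraction_koszulMap_zero, hg, map_zero]
    simp [sum_smul, mul_smul, hxg, koszulCoboundaries]
  | succ i =>
    have hxg (q : Fin n) : koszulMap A M x i (koszulContraction A q i g) = x q • g := by
      simpa [hg] using koszulMap_koszulContraction_add x q g
    exact ⟨∑ q, c q • koszulContraction A q i g, by simp [hxg, sum_smul, mul_smul]⟩

end Contraction

namespace KoszulCone

variable {A : Type*} [CommRing A] {M : Type*} [AddCommGroup M] [Module A M] {n : ℕ}
  (p : Fin (n + 1))

lemma pivot_notMem_map (s : Finset (Fin n)) : p ∉ s.map p.succAboveEmb := by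
  simp [Fin.succAbove_ne]

lemma countBelow_map_succAbove (s : Finset (Fin n)) (m : Fin n) :
    countBelow (s.map p.succAboveEmb) (p.succAbove m) = countBelow s m := by
  rw [countBelow, filter_map, card_map, countBelow]
  congr 1
  exact filter_congr fun k _ => by simp [Fin.succAbove_lt_succAbove_iff]

noncomputable def omitPivot (t : Finset (Fin (n + 1))) : Finset (Fin n) :=
  t.preimage p.succAboveEmb p.succAboveEmb.injective.injOn

lemma omitPivot_map (s : Finset (Fin n)) : omitPivot p (s.map p.succAboveEmb) = s :=
  preimage_map _ _

lemma map_omitPivot {t : Finset (Fin (n + 1))} (hp : p ∉ t) :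
    (omitPivot p t).map p.succAboveEmb = t := by
  ext j
  simp only [omitPivot, mem_map, mem_preimage]
  refine ⟨fun ⟨m, hm, hmj⟩ => hmj ▸ hm, fun hj => ?_⟩
  obtain ⟨m, rfl⟩ := Fin.exists_succAbove_eq (ne_of_mem_of_not_mem hj hp)
  exact ⟨m, hj, rfl⟩

lemma card_omitPivot {t : Finset (Fin (n + 1))} (hp : p ∉ t) : #(omitPivot p t) = #t := by
  conv_rhs => rw [← map_omitPivot p hp]
  exact (card_map _).symm

variable (A M) in
/-- Together with `snd`, the restriction of a cochain of `y : Fin (n + 1) → A` to the sets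
avoiding and containing the pivot `p`; `fst_koszulMap` and `snd_koszulMap` say that this
identifies the Koszul complex of `y` with the mapping cone of `y p` on that of `y ∘ p.succAbove`. -/
def fst (i : ℕ) : KoszulCochain M (n + 1) i →ₗ[A] KoszulCochain M n i where
  toFun g s := g ⟨s.1.map p.succAboveEmb, by rw [card_map, s.2]⟩
  map_add' _ _ := rfl
  map_smul' _ _ := rfl

variable (A M) in
def snd (i : ℕ) : KoszulCochain M (n + 1) (i + 1) →ₗ[A] KoszulCochain M n i where
  toFun g s := (-1 : A) ^ countBelow (s.1.map p.succAboveEmb) p •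
    g ⟨insert p (s.1.map p.succAboveEmb), by
      rw [card_insert_of_notMem (pivot_notMem_map p _), card_map, s.2]⟩
  map_add' _ _ := by ext; simp
  map_smul' a _ := funext fun _ => smul_comm _ a _

lemma fst_injective_zero : Function.Injective (fst A M p 0) := by
  intro g g' h
  ext t
  have hp : p ∉ t.1 := by simp [card_eq_zero.1 t.2]
  have := congrFun h ⟨omitPivot p t.1, by rw [card_omitPivot p hp, t.2]⟩
  simpa [fst, map_omitPivot p hp] using this

lemma fst_surjective_zero : Function.Surjective (fst A M p 0) :=
  fun a => ⟨fun _ => a ⟨∅, card_empty⟩, funext fun s => congrArg a (Subtype.ext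
    (card_eq_zero.1 s.2).symm)⟩

lemma ext {i : ℕ} {g g' : KoszulCochain M (n + 1) (i + 1)}
    (hfst : fst A M p (i + 1) g = fst A M p (i + 1) g')
    (hsnd : snd A M p i g = snd A M p i g') : g = g' := by
  ext t
  by_cases hp : p ∈ t.1
  · have hp' : p ∉ t.1.erase p := notMem_erase p t.1
    have hcard : #(omitPivot p (t.1.erase p)) = i := by
      rw [card_omitPivot p hp', card_erase_of_mem hp, t.2]; rfl
    have := congrArg ((-1 : A) ^ countBelow (t.1.erase p) p • ·)
      (congrFun hsnd ⟨_, hcard⟩)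
    simpa [snd, map_omitPivot p hp', insert_erase hp, neg_one_pow_smul_neg_one_pow_smul]
      using this
  · have := congrFun hfst ⟨omitPivot p t.1, by rw [card_omitPivot p hp, t.2]⟩
    simpa [fst, map_omitPivot p hp] using this

lemma exists_fst_snd {i : ℕ} (a : KoszulCochain M n (i + 1)) (b : KoszulCochain M n i) :
    ∃ g, fst A M p (i + 1) g = a ∧ snd A M p i g = b := by
  refine ⟨fun t => if hp : p ∈ t.1 then
      (-1 : A) ^ countBelow (t.1.erase p) p • b ⟨omitPivot p (t.1.erase p), by
        rw [card_omitPivot p (notMem_erase p t.1), card_erase_of_mem hp, t.2]; rfl⟩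
    else a ⟨omitPivot p t.1, by rw [card_omitPivot p hp, t.2]⟩, funext fun s => ?_,
    funext fun s => ?_⟩
  · simp [fst, omitPivot_map]
  · simp [snd, erase_insert (pivot_notMem_map p _), omitPivot_map,
      neg_one_pow_smul_neg_one_pow_smul]

lemma fst_koszulMap (y : Fin (n + 1) → A) {i : ℕ} (g : KoszulCochain M (n + 1) i) :
    fst A M p (i + 1) (koszulMap A M y i g) =
      koszulMap A M (y ∘ p.succAbove) i (fst A M p i g) := by
  ext s
  simp only [fst, LinearMap.coe_mk, AddHom.coe_mk, koszulMap_apply, sum_map]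
  refine sum_congr rfl fun m hm => ?_
  rw [koszulTerm, koszulTerm, dif_pos hm, dif_pos (mem_map_of_mem _ hm)]
  simp only [Fin.succAboveEmb_apply, countBelow_map_succAbove, Function.comp_apply]
  exact congrArg _ (congrArg g (Subtype.ext (map_erase _ _ _).symm))

lemma snd_koszulMap_zero (y : Fin (n + 1) → A) (g : KoszulCochain M (n + 1) 0) :
    snd A M p 0 (koszulMap A M y 0 g) = y p • fst A M p 0 g := by
  ext s
  have hs : s.1 = ∅ := card_eq_zero.1 s.2
  simp only [snd, fst, LinearMap.coe_mk, AddHom.coe_mk, koszulMap_apply, Pi.smul_apply]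
  rw [sum_insert (pivot_notMem_map p _)]
  simp [hs, koszulTerm, countBelow, filter_singleton]

lemma snd_koszulMap (y : Fin (n + 1) → A) {i : ℕ} (g : KoszulCochain M (n + 1) (i + 1)) :
    snd A M p (i + 1) (koszulMap A M y (i + 1) g) =
      y p • fst A M p (i + 1) g - koszulMap A M (y ∘ p.succAbove) i (snd A M p i g) := by
  ext s
  simp only [snd, fst, LinearMap.coe_mk, AddHom.coe_mk, koszulMap_apply, Pi.smul_apply,
    Pi.sub_apply]
  rw [sum_insert (pivot_notMem_map p _), smul_add, sum_map, smul_sum, sub_eq_add_neg,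
    ← sum_neg_distrib]
  congr 1
  · rw [koszulTerm, dif_pos (mem_insert_self _ _), countBelow_insert_of_not_lt (lt_irrefl p),
      smul_smul, ← mul_assoc, neg_one_pow_mul_self, one_mul]
    exact congrArg _ (congrArg g (Subtype.ext (erase_insert (pivot_notMem_map p _))))
  · refine sum_congr rfl fun m hm => ?_
    have hsign := neg_one_pow_countBelow_add_neg_one_pow_countBelow (A := A)
      (mem_map_of_mem p.succAboveEmb hm) (pivot_notMem_map p s.1)
    rw [koszulTerm, koszulTerm, dif_pos (mem_insert_of_mem (mem_map_of_mem _ hm)), dif_pos hm]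
    simp only [Function.comp_apply, Fin.succAboveEmb_apply, map_erase,
      countBelow_map_succAbove] at hsign ⊢
    rw [smul_smul, smul_smul, ← neg_smul]
    refine congrArg₂ (· • ·) ?_
      (congrArg g (Subtype.ext (erase_insert_of_ne (Fin.succAbove_ne p m).symm)))
    linear_combination y (p.succAbove m) * hsign

end KoszulCone

section Pivot

open KoszulCone LinearMap

variable {A : Type*} [CommRing A] {M : Type*} [AddCommGroup M] [Module A M] {n : ℕ}
  (p : Fin (n + 1)) (y : Fin (n + 1) → A)

lemma fst_mem_koszulCoboundaries {i : ℕ} {g : KoszulCochain M (n + 1) i}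
    (hg : g ∈ koszulCoboundaries A M y i) :
    fst A M p i g ∈ koszulCoboundaries A M (y ∘ p.succAbove) i := by
  cases i with
  | zero =>
    rw [koszulCoboundaries, Submodule.mem_bot] at hg ⊢
    rw [hg, map_zero]
  | succ i =>
    obtain ⟨w, rfl⟩ := hg
    exact ⟨fst A M p i w, (fst_koszulMap p y w).symm⟩

lemma mem_koszulCoboundaries_of_fst_eq {i : ℕ} {g : KoszulCochain M (n + 1) (i + 1)}
    {w : KoszulCochain M n i} (hfst : fst A M p (i + 1) g = koszulMap A M (y ∘ p.succAbove) i w)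
    (hsnd : snd A M p i g - y p • w ∈ koszulCoboundaries A M (y ∘ p.succAbove) i) :
    g ∈ koszulCoboundaries A M y (i + 1) := by
  cases i with
  | zero =>
    obtain ⟨u, rfl⟩ := fst_surjective_zero (A := A) p w
    rw [koszulCoboundaries, Submodule.mem_bot, sub_eq_zero] at hsnd
    exact ⟨u, ext p (by rw [fst_koszulMap, hfst]) (by rw [snd_koszulMap_zero, hsnd])⟩
  | succ i =>
    obtain ⟨v, hv⟩ := hsnd
    obtain ⟨u, hu₁, hu₂⟩ := exists_fst_snd (A := A) p w (-v)
    refine ⟨u, ext p (by rw [fst_koszulMap, hu₁, hfst]) ?_⟩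
    rw [snd_koszulMap, hu₁, hu₂, map_neg, hv]
    abel

lemma ker_koszulMap_le_of_comp_succAbove {k : ℕ}
    (h : ∀ j ≤ k, ker (koszulMap A M (y ∘ p.succAbove) j) ≤
      koszulCoboundaries A M (y ∘ p.succAbove) j) :
    ker (koszulMap A M y k) ≤ koszulCoboundaries A M y k := by
  intro g hg
  rw [mem_ker] at hg
  have hfst : fst A M p k g ∈ ker (koszulMap A M (y ∘ p.succAbove) k) := by
    rw [mem_ker, ← fst_koszulMap, hg, map_zero]
  cases k with
  | zero =>
    have h₀ := h 0 le_rfl hfst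
    rw [koszulCoboundaries, Submodule.mem_bot] at h₀ ⊢
    exact fst_injective_zero p (h₀.trans (map_zero _).symm)
  | succ k =>
    obtain ⟨w, hw⟩ := h (k + 1) le_rfl hfst
    have hsnd := snd_koszulMap p y g
    rw [hg, map_zero, eq_comm, sub_eq_zero] at hsnd
    refine mem_koszulCoboundaries_of_fst_eq p y hw.symm (h k (by omega) ?_)
    rw [mem_ker, map_sub, map_smul, hw, hsnd, sub_self]

lemma exists_mem_ker_fst_eq (hz : y p ∈ Ideal.span (Set.range (y ∘ p.succAbove))) {i : ℕ}
    {g : KoszulCochain M n i} (hg : g ∈ ker (koszulMap A M (y ∘ p.succAbove) i)) :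
    ∃ u ∈ ker (koszulMap A M y i), fst A M p i u = g := by
  have hyg := smul_mem_koszulCoboundaries hz hg
  rw [mem_ker] at hg
  cases i with
  | zero =>
    obtain ⟨u, rfl⟩ := fst_surjective_zero (A := A) p g
    rw [koszulCoboundaries, Submodule.mem_bot] at hyg
    refine ⟨u, mem_ker.2 (ext (A := A) p ?_ ?_), rfl⟩
    · rw [fst_koszulMap, hg, map_zero]
    · rw [snd_koszulMap_zero, hyg, map_zero]
  | succ i =>
    obtain ⟨w, hw⟩ := hyg
    obtain ⟨u, hu₁, hu₂⟩ := exists_fst_snd (A := A) p g w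
    refine ⟨u, mem_ker.2 (ext (A := A) p ?_ ?_), hu₁⟩
    · rw [fst_koszulMap, hu₁, hg, map_zero]
    · rw [snd_koszulMap, hu₁, hu₂, hw, sub_self, map_zero]

lemma ker_koszulMap_comp_succAbove_le (hz : y p ∈ Ideal.span (Set.range (y ∘ p.succAbove)))
    {i : ℕ} (h : ker (koszulMap A M y i) ≤ koszulCoboundaries A M y i) :
    ker (koszulMap A M (y ∘ p.succAbove) i) ≤ koszulCoboundaries A M (y ∘ p.succAbove) i := by
  intro g hg
  obtain ⟨u, hu, rfl⟩ := exists_mem_ker_fst_eq p y hz hg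
  exact fst_mem_koszulCoboundaries p y (h hu)

lemma kgrSeq_comp_succAbove_le : kgrSeq A M (y ∘ p.succAbove) ≤ kgrSeq A M y := by
  refine kgrSeq_le_of_forall_exists_le fun k hk => ?_
  by_contra! h
  simp only [koszulCohomologyNeZero_iff, not_not] at h hk
  exact hk (ker_koszulMap_le_of_comp_succAbove p y h)

lemma kgrSeq_comp_succAbove_of_mem_span
    (hz : y p ∈ Ideal.span (Set.range (y ∘ p.succAbove))) :
    kgrSeq A M (y ∘ p.succAbove) = kgrSeq A M y := by
  refine le_antisymm (kgrSeq_comp_succAbove_le p y)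
    (kgrSeq_le_of_forall_exists_le fun k hk => ⟨k, le_rfl, ?_⟩)
  rw [koszulCohomologyNeZero_iff] at hk ⊢
  exact fun h => hk (ker_koszulMap_comp_succAbove_le p y hz h)

end Pivot

section Subsequence

variable {A : Type*} [CommRing A] {M : Type*} [AddCommGroup M] [Module A M]

lemma Fin.exists_succAbove_comp_of_strictMono {m k : ℕ} {e : Fin m → Fin (m + k + 1)}
    (he : StrictMono e) :
    ∃ (p : Fin (m + k + 1)) (e' : Fin m → Fin (m + k)),
      StrictMono e' ∧ e = p.succAbove ∘ e' := by
  obtain ⟨p, hp⟩ : ∃ p, p ∉ Set.range e := by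
    by_contra! h
    have := Fintype.card_le_of_surjective e h
    simp at this
  choose e' he' using fun i => Fin.exists_succAbove_eq (fun h => hp ⟨i, h⟩ : e i ≠ p)
  refine ⟨p, e', fun a b hab => ?_, funext fun i => (he' i).symm⟩
  rw [← Fin.succAbove_lt_succAbove_iff (p := p), he', he']
  exact he hab

lemma kgrSeq_comp_le_of_strictMono {m n : ℕ} (y : Fin n → A) {e : Fin m → Fin n}
    (he : StrictMono e) : kgrSeq A M (y ∘ e) ≤ kgrSeq A M y := by
  obtain ⟨k, rfl⟩ := Nat.exists_eq_add_of_le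
    (by simpa using Fintype.card_le_of_injective e he.injective)
  induction k with
  | zero => rw [he.eq_id, Function.comp_id]
  | succ k ih =>
    obtain ⟨p, e', he', rfl⟩ := Fin.exists_succAbove_comp_of_strictMono he
    exact (ih (y ∘ p.succAbove) he').trans (kgrSeq_comp_succAbove_le p y)

lemma kgrSeq_comp_of_strictMono_of_mem_span {m n : ℕ} (y : Fin n → A) {e : Fin m → Fin n}
    (he : StrictMono e) (hspan : ∀ q ∉ Set.range e, y q ∈ Ideal.span (Set.range (y ∘ e))) :
    kgrSeq A M (y ∘ e) = kgrSeq A M y := by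
  obtain ⟨k, rfl⟩ := Nat.exists_eq_add_of_le
    (by simpa using Fintype.card_le_of_injective e he.injective)
  induction k with
  | zero => rw [he.eq_id, Function.comp_id]
  | succ k ih =>
    obtain ⟨p, e', he', rfl⟩ := Fin.exists_succAbove_comp_of_strictMono he
    have hp : y p ∈ Ideal.span (Set.range (y ∘ p.succAbove)) :=
      Ideal.span_mono (Set.range_comp_subset_range _ _)
        (hspan p fun ⟨i, hi⟩ => Fin.succAbove_ne p (e' i) hi)
    refine (ih (y ∘ p.succAbove) he' fun q hq => ?_).trans
      (kgrSeq_comp_succAbove_of_mem_span p y hp)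
    refine hspan (p.succAbove q) fun ⟨i, hi⟩ => hq ⟨i, ?_⟩
    exact Fin.succAbove_right_injective hi

lemma kgr_span_range {ℓ : ℕ} (g : Fin ℓ → A) :
    kgr A (Ideal.span (Set.range g)) M = kgrSeq A M g := by
  refine le_antisymm (iSup_le fun m => iSup_le fun z => iSup_le fun hz => ?_)
    (le_iSup_of_le ℓ (le_iSup_of_le g (le_iSup_of_le (fun j => Ideal.subset_span ⟨j, rfl⟩)
      le_rfl)))
  have hg : Fin.append g z ∘ Fin.castAdd m = g := funext (Fin.append_left g z)
  have hz' : Fin.append g z ∘ Fin.natAdd ℓ = z := funext (Fin.append_right g z)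
  have hspan : ∀ q ∉ Set.range (Fin.castAdd m), Fin.append g z q ∈
      Ideal.span (Set.range (Fin.append g z ∘ Fin.castAdd m)) := by
    intro q hq
    induction q using Fin.addCases with
    | left i => exact absurd ⟨i, rfl⟩ hq
    | right j => rw [hg, Fin.append_right]; exact hz j
  calc kgrSeq A M z
      = kgrSeq A M (Fin.append g z ∘ Fin.natAdd ℓ) := by rw [hz']
    _ ≤ kgrSeq A M (Fin.append g z) := kgrSeq_comp_le_of_strictMono _ (Fin.strictMono_natAdd ℓ)
    _ = kgrSeq A M (Fin.append g z ∘ Fin.castAdd m) :=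
      (kgrSeq_comp_of_strictMono_of_mem_span _ (Fin.strictMono_castAdd m) hspan).symm
    _ = kgrSeq A M g := by rw [hg]

end Subsequence

section Amalgamation

variable {A B : Type*} [CommRing A] [CommRing B] (f : A →+* B) (J : Ideal B)

lemma kgrSeq_amalgamation {ℓ : ℕ} (g : Fin ℓ → A) :
    kgrSeq (amalgamation f J) (amalgamation f J) (amalgIota f J ∘ g) =
      min (kgrSeq A A g) (@kgrSeq A _ J _ (Module.compHom J f) ℓ g) := by
  let _ : Module A J := Module.compHom J f
  let _ : Module A (amalgamation f J) := Module.compHom _ (amalgIota f J)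
  let e : amalgamation f J ≃ₗ[A] A × J :=
    { toFun r := (r.1.1, ⟨r.1.2 - f r.1.1, r.2⟩)
      invFun z := ⟨(z.1, f z.1 + z.2), by simp [amalgamation]⟩
      map_add' r s := Prod.ext rfl (Subtype.ext (by simp; abel))
      map_smul' a r := Prod.ext rfl (Subtype.ext (by
        change (amalgIota f J a * r).1.2 - f (amalgIota f J a * r).1.1 = f a * (r.1.2 - f r.1.1)
        simp [amalgIota, mul_sub]))
      left_inv r := Subtype.ext (Prod.ext rfl (by simp))
      right_inv z := Prod.ext rfl (Subtype.ext (by simp)) }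
  rw [← kgrSeq_compHom, kgrSeq_congr (koszulCohomologyNeZero_congr e g), kgrSeq_prod]

lemma kgrIdeal_span_range {ℓ : ℕ} (g : Fin ℓ → A) :
    kgrIdeal f J (Ideal.span (Set.range g)) = @kgrSeq A _ J _ (Module.compHom J f) ℓ g :=
  @kgr_span_range A _ J _ (Module.compHom J f) ℓ g

end Amalgamation

/-- For every finitely generated ideal `𝔟` of `A`,
`kgr_{A⋈^f J}(𝔟^e, A⋈^f J) = min { kgr_A(𝔟, A), kgr_A(𝔟, J) }`. -/
theorem kgr_ext_eq_min_of_fg {A B : Type*} [CommRing A] [CommRing B] (f : A →+* B)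
    (J : Ideal B) (𝔟 : Ideal A) (hfg : 𝔟.FG) :
    kgr ↥(amalgamation f J) (idealExt f J 𝔟) ↥(amalgamation f J) =
      min (kgr A 𝔟 A) (kgrIdeal f J 𝔟) := by
  obtain ⟨ℓ, g, rfl⟩ := Submodule.fg_iff_exists_fin_generating_family.1 hfg
  have hext : idealExt f J (Ideal.span (Set.range g)) =
      Ideal.span (Set.range (amalgIota f J ∘ g)) := by
    rw [idealExt, Ideal.map_span, Set.range_comp]
  rw [hext, kgr_span_range, kgr_span_range, kgrIdeal_span_range, kgrSeq_amalgamation]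
end

section
/- Let A and B be commutative rings, f : A → B a ring homomorphism, and J an ideal of B contained in the nil radical Nil(B). Let 𝔞 be an ideal of A and 𝔭 a prime ideal of A. Then: (1) 𝔭 is a minimal prime over 𝔞 if and only if 𝔭'^f is a minimal prime over 𝔞^e; (2) height 𝔞 = height 𝔞^e; (3) the set of minimal primes over 𝔭^e is exactly {𝔭'^f}, and in particular height 𝔭^e = height 𝔭'^f. -/
/-!
Projection to the first factor `π : A ⋈^f J → A` is a retraction of `ι_A` whose kernel
`0 × J` is nil when `J ⊆ Nil(B)`. For a prime `𝔮` of `A ⋈^f J` and any `z`, the element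
`z - ι_A (π z)` lies in this kernel, hence in `𝔮`; so `𝔮 = π⁻¹ (ι_A⁻¹ 𝔮)`. Consequently
`𝔮 ↦ ι_A⁻¹ 𝔮` is an order isomorphism `Spec (A ⋈^f J) ≃ Spec A`, preserving heights, and the
ideals `𝔞^e` and `π⁻¹ 𝔞` lie in the same primes, so they have the same minimal primes and
height; finally `π⁻¹ 𝔭 = 𝔭'^f`.
-/

lemma Ideal.minimalPrimes_eq_of_forall_isPrime_le_iff {R : Type*} [CommRing R] {I I' : Ideal R}
    (h : ∀ q : Ideal R, q.IsPrime → (I ≤ q ↔ I' ≤ q)) : I.minimalPrimes = I'.minimalPrimes := by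
  have hsame : (fun q : Ideal R => q.IsPrime ∧ I ≤ q) = (fun q => q.IsPrime ∧ I' ≤ q) :=
    funext fun q => propext (and_congr_right (h q))
  ext p
  simp only [Set.mem_ofPred_eq, Ideal.IsMinimalPrime, hsame]

lemma idealHeight_eq_of_forall_le_iff {R : Type*} [CommRing R] {I I' : Ideal R}
    (h : ∀ q : PrimeSpectrum R, I ≤ q.asIdeal ↔ I' ≤ q.asIdeal) :
    idealHeight R I = idealHeight R I' := by
  simp only [idealHeight, h]

lemma idealHeight_eq_of_orderIso {R S : Type*} [CommRing R] [CommRing S]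
    (e : PrimeSpectrum R ≃o PrimeSpectrum S) {I : Ideal R} {I' : Ideal S}
    (h : ∀ q : PrimeSpectrum R, I ≤ q.asIdeal ↔ I' ≤ (e q).asIdeal) :
    idealHeight R I = idealHeight S I' := by
  rw [idealHeight, idealHeight, ← e.toEquiv.iInf_comp]
  simp only [OrderIso.coe_toEquiv, Order.height_orderIso, h]

section NilpotentRetraction

variable {R S : Type*} [CommRing R] [CommRing S] {π : R →+* S} {ι : S →+* R}

lemma Ideal.comap_comap_eq_self_of_leftInverse (hπι : Function.LeftInverse π ι) (I : Ideal S) :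
    (I.comap π).comap ι = I := by
  ext s
  simp only [Ideal.mem_comap, hπι s]

lemma Ideal.comap_comap_eq_self_of_ker_le_nilradical (hπι : Function.LeftInverse π ι)
    (hker : RingHom.ker π ≤ nilradical R) (q : Ideal R) [q.IsPrime] :
    (q.comap ι).comap π = q := by
  ext z
  have hz : z - ι (π z) ∈ q :=
    nilradical_le_prime q (hker (by simp [RingHom.mem_ker, hπι (π z)]))
  simp only [Ideal.mem_comap]
  exact ⟨fun h => by simpa using q.add_mem h hz, fun h => by simpa using q.sub_mem h hz⟩

lemma Ideal.map_le_iff_comap_le_of_ker_le_nilradical (hπι : Function.LeftInverse π ι)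
    (hker : RingHom.ker π ≤ nilradical R) (I : Ideal S) (q : Ideal R) [q.IsPrime] :
    I.map ι ≤ q ↔ I.comap π ≤ q := by
  rw [Ideal.map_le_iff_le_comap]
  constructor
  · intro h
    simpa only [Ideal.comap_comap_eq_self_of_ker_le_nilradical hπι hker] using
      Ideal.comap_mono (f := π) h
  · intro h
    simpa only [Ideal.comap_comap_eq_self_of_leftInverse hπι] using Ideal.comap_mono (f := ι) h

lemma Ideal.minimalPrimes_map_eq_minimalPrimes_comap (hπι : Function.LeftInverse π ι)
    (hker : RingHom.ker π ≤ nilradical R) (I : Ideal S) :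
    (I.map ι).minimalPrimes = (I.comap π).minimalPrimes :=
  Ideal.minimalPrimes_eq_of_forall_isPrime_le_iff fun _ _ =>
    Ideal.map_le_iff_comap_le_of_ker_le_nilradical hπι hker I _

def PrimeSpectrum.orderIsoOfLeftInverse (hπι : Function.LeftInverse π ι)
    (hker : RingHom.ker π ≤ nilradical R) : PrimeSpectrum R ≃o PrimeSpectrum S where
  toFun := PrimeSpectrum.comap ι
  invFun := PrimeSpectrum.comap π
  left_inv q := PrimeSpectrum.ext (Ideal.comap_comap_eq_self_of_ker_le_nilradical hπι hker _)
  right_inv p := PrimeSpectrum.ext (Ideal.comap_comap_eq_self_of_leftInverse hπι _)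
  map_rel_iff' {q₁ q₂} := by
    refine ⟨fun h => ?_, fun h => Ideal.comap_mono h⟩
    show q₁.asIdeal ≤ q₂.asIdeal
    simpa only [Ideal.comap_comap_eq_self_of_ker_le_nilradical hπι hker] using
      Ideal.comap_mono (f := π) (show q₁.asIdeal.comap ι ≤ q₂.asIdeal.comap ι from h)

lemma idealHeight_map_eq_of_ker_le_nilradical (hπι : Function.LeftInverse π ι)
    (hker : RingHom.ker π ≤ nilradical R) (I : Ideal S) :
    idealHeight R (I.map ι) = idealHeight S I :=
  idealHeight_eq_of_orderIso (PrimeSpectrum.orderIsoOfLeftInverse hπι hker) fun _ =>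
    Ideal.map_le_iff_le_comap

end NilpotentRetraction

section Amalgamation

variable {A B : Type*} [CommRing A] [CommRing B] (f : A →+* B) (J : Ideal B)

def amalgFst : amalgamation f J →+* A :=
  (RingHom.fst A B).comp (amalgamation f J).subtype

lemma amalgFst_leftInverse_amalgIota : Function.LeftInverse (amalgFst f J) (amalgIota f J) :=
  fun _ => rfl

lemma ker_amalgFst_le_nilradical (hJ : J ≤ nilradical B) :
    RingHom.ker (amalgFst f J) ≤ nilradical (amalgamation f J) := by
  rintro ⟨⟨a, b⟩, hab⟩ (ha : a = 0)
  subst ha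
  have hb : b ∈ J := by simpa using (show (0, b).2 - f (0, b).1 ∈ J from hab)
  obtain ⟨n, hn⟩ := mem_nilradical.mp (hJ hb)
  refine ⟨n + 1, Subtype.ext (Prod.ext ?_ ?_)⟩
  · simp
  · simp [pow_succ, hn]

lemma primeAmalg_eq_comap (𝔭 : Ideal A) : primeAmalg f J 𝔭 = 𝔭.comap (amalgFst f J) := rfl

end Amalgamation

/-- Assume `J ⊆ Nil(B)`, and let `𝔞` be an ideal and `𝔭` a prime of `A`.
Then: (1) `𝔭` is minimal over `𝔞` iff `𝔭'^f` is minimal over `𝔞^e`;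
(2) `height 𝔞 = height 𝔞^e`;
(3) `Min(𝔭^e) = {𝔭'^f}`, and in particular `height 𝔭^e = height 𝔭'^f`. -/
theorem minimalPrimes_amalgamation_of_nil {A B : Type*} [CommRing A] [CommRing B]
    (f : A →+* B) (J : Ideal B) (hJ : J ≤ nilradical B) (𝔞 𝔭 : Ideal A)
    (h𝔭 : 𝔭.IsPrime) :
    (𝔭 ∈ 𝔞.minimalPrimes ↔ primeAmalg f J 𝔭 ∈ (idealExt f J 𝔞).minimalPrimes) ∧
      idealHeight A 𝔞 = idealHeight ↥(amalgamation f J) (idealExt f J 𝔞) ∧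
      ((idealExt f J 𝔭).minimalPrimes = {primeAmalg f J 𝔭} ∧
        idealHeight ↥(amalgamation f J) (idealExt f J 𝔭) =
          idealHeight ↥(amalgamation f J) (primeAmalg f J 𝔭)) := by
  have hπι := amalgFst_leftInverse_amalgIota f J
  have hker := ker_amalgFst_le_nilradical f J hJ
  have hsurj : Function.Surjective (amalgFst f J) := hπι.surjective
  rw [idealExt, idealExt, primeAmalg_eq_comap,
    Ideal.minimalPrimes_map_eq_minimalPrimes_comap hπι hker,
    Ideal.minimalPrimes_map_eq_minimalPrimes_comap hπι hker]
  refine ⟨?_, (idealHeight_map_eq_of_ker_le_nilradical hπι hker 𝔞).symm, ?_, ?_⟩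
  · rw [Ideal.comap_minimalPrimes_eq_of_surjective hsurj,
      (Ideal.comap_injective_of_surjective _ hsurj).mem_set_image]
  · exact Ideal.minimalPrimes_eq_subsingleton_self
  · exact idealHeight_eq_of_forall_le_iff fun q =>
      Ideal.map_le_iff_comap_le_of_ker_le_nilradical hπι hker 𝔭 q.asIdeal
end
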